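/- Let D be the 5×5 matrix with rows (0, j3, j2, -k1, p1), (-j3, 0, j1, k2, -p2), (-j2, -j1, 0, -k3, p3), (-k1, k2, -k3, 0, h), (p1, -p2, p3, -h, 0) over the polynomial ring ℚ[j1,j2,j3,p1,p2,p3,k1,k2,k3,h]. Then det(D - T·Id₅) = T⁵ + C₂T³ + C₄T, where C₂ = (j1²+j2²+j3²) - (p1²+p2²+p3²) - (k1²+k2²+k3²) + h², and C₄ = (j1²+j2²+j3²)h² + ((p1²+p2²+p3²)(k1²+k2²+k3²) - (p1k1+p2k2+p3k3)²) - (j1p1+j2p2+j3p3)² - (j1k1+j2k2+j3k3)² - 2(j1(p2k3-p3k2)+j2(p3k1-p1k3)+j3(p1k2-p2k1))h. -/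

import Mathlib

open Matrix Polynomial

noncomputable def j1 : MvPolynomial (Fin 10) ℚ := MvPolynomial.X 0
noncomputable def j2 : MvPolynomial (Fin 10) ℚ := MvPolynomial.X 1
noncomputable def j3 : MvPolynomial (Fin 10) ℚ := MvPolynomial.X 2
noncomputable def p1 : MvPolynomial (Fin 10) ℚ := MvPolynomial.X 3
noncomputable def p2 : MvPolynomial (Fin 10) ℚ := MvPolynomial.X 4
noncomputable def p3 : MvPolynomial (Fin 10) ℚ := MvPolynomial.X 5
noncomputable def k1 : MvPolynomial (Fin 10) ℚ := MvPolynomial.X 6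
noncomputable def k2 : MvPolynomial (Fin 10) ℚ := MvPolynomial.X 7
noncomputable def k3 : MvPolynomial (Fin 10) ℚ := MvPolynomial.X 8
noncomputable def h : MvPolynomial (Fin 10) ℚ := MvPolynomial.X 9

noncomputable def D : Matrix (Fin 5) (Fin 5) (MvPolynomial (Fin 10) ℚ) :=
  !![0, j3, j2, -k1, p1;
    -j3, 0, j1, k2, -p2;
    -j2, -j1, 0, -k3, p3;
    -k1, k2, -k3, 0, h;
    p1, -p2, p3, -h, 0]

set_option maxHeartbeats 4000000 in
theorem main :
    Matrix.det ((Polynomial.X : Polynomial (MvPolynomial (Fin 10) ℚ)) • (1 : Matrix (Fin 5) (Fin 5) (Polynomial (MvPolynomial (Fin 10) ℚ))) - (D.map Polynomial.C)) =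
      Polynomial.X ^ 5 + Polynomial.C ((j1^2 + j2^2 + j3^2) - (p1^2 + p2^2 + p3^2) - (k1^2 + k2^2 + k3^2) + h^2) * Polynomial.X ^ 3 + Polynomial.C ((j1^2 + j2^2 + j3^2)*h^2 + ((p1^2 + p2^2 + p3^2)*(k1^2 + k2^2 + k3^2) - (p1*k1 + p2*k2 + p3*k3)^2) - (j1*p1 + j2*p2 + j3*p3)^2 - (j1*k1 + j2*k2 + j3*k3)^2 - 2*(j1*(p2*k3 - p3*k2) + j2*(p3*k1 - p1*k3) + j3*(p1*k2 - p2*k1))*h) * Polynomial.X := by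
  simp only [D, Matrix.det_succ_row_zero, Fin.sum_univ_succ, Fin.sum_univ_zero,
    Matrix.submatrix_apply, Matrix.sub_apply, Matrix.smul_apply, Matrix.one_apply,
    Matrix.map_apply, Matrix.cons_val', Matrix.cons_val_zero, Matrix.cons_val_one,
    Matrix.head_cons, Matrix.empty_val', Matrix.cons_val_fin_one, Matrix.of_apply,
    Fin.isValue, Fin.succAbove, Fin.val_zero, Fin.val_succ, Fin.castSucc, Fin.castAdd,
    Fin.castLE, Fin.lt_def, Matrix.det_fin_one, Matrix.tail_cons, Matrix.head_fin_const,
    map_neg, map_zero, smul_eq_mul, mul_one, mul_zero]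
  norm_num [Fin.ext_iff, j1, j2, j3, p1, p2, p3, k1, k2, k3, h]
  simp only [map_add, map_sub, _root_.map_mul, map_pow, map_ofNat, map_neg, _root_.map_one]
  simp only [Matrix.cons_val, Matrix.cons_val_two, Matrix.tail_cons, Matrix.head_cons, Matrix.cons_val_one,
    Matrix.cons_val_zero, Matrix.vecHead, map_zero, map_neg]
  ring
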